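/- arXiv:1708.01272 — 2 statements merged into one kernel-verified Lean document; each statement's English description precedes it below -/
import Mathlib

section
/- Let M = (X, d) be a finite metric space induced by a finite connected tight weighted graph W with positive edge weights (d = d_W). Then the geodesics of the betweenness structure of M coincide with the minimum-weight paths of W: an induced path P in the underlying graph of W is a minimum-weight path between its endpoints in W if and only if the betweenness relation of M restricted to V(P) equals the betweenness relation of the path P. -/
/-!
Along a minimum-weight walk from `x`, every initial segment has minimum weight again, so
`d x b = d x a + d a b` whenever `a` precedes `b`. Then `d x ·` maps the vertices of the walk
isometrically and in order into `ℝ`, where betweenness is order betweenness. Conversely, if the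
betweenness relations agree, each vertex after the first lies between the first one and the
end, and tightness makes every edge weight the distance of its ends, so by induction along the
path the weights add up to `d x y`.
-/

/-- `d` is a metric on `X`. -/
def IsMetric {X : Type*} (d : X → X → ℝ) : Prop :=
  (∀ x y, d x y = 0 ↔ x = y) ∧ (∀ x y, d x y = d y x) ∧ ∀ x y z, d x z ≤ d x y + d y z

/-- Betweenness relation of the distance function `d`. -/
def btw {X : Type*} (d : X → X → ℝ) (x y z : X) : Prop :=
  d x z = d x y + d y z

/-- The adjacency graph of a distance function `d` (symmetrized form; coincides with the
usual one when `d` is a metric): `x ~ z` iff no third point lies between them. -/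
def adjGraphD {X : Type*} (d : X → X → ℝ) : SimpleGraph X where
  Adj x z := x ≠ z ∧ ∀ y, y ≠ x → y ≠ z → d x z ≠ d x y + d y z ∧ d z x ≠ d z y + d y x
  symm := ⟨by
    rintro x z ⟨hxz, h⟩
    exact ⟨hxz.symm, fun y hyz hyx => ⟨(h y hyx hyz).2, (h y hyx hyz).1⟩⟩⟩
  loopless := ⟨fun x h => h.1 rfl⟩

/-- Betweenness relation of the shortest-path metric of a graph `G`. -/
def gBtw {V : Type*} (G : SimpleGraph V) (x y z : V) : Prop :=
  G.dist x z = G.dist x y + G.dist y z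

/-- A walk is induced if the only edges of `G` between its vertices are its own edges. -/
def InducedWalk {V : Type*} (G : SimpleGraph V) {x y : V} (p : G.Walk x y) : Prop :=
  ∀ a ∈ p.support, ∀ b ∈ p.support, G.Adj a b → s(a, b) ∈ p.edges

/-- A block graph: connected, and every cycle induces a complete subgraph. -/
def IsBlockGraph {V : Type*} (G : SimpleGraph V) : Prop :=
  G.Connected ∧ ∀ (v : V) (p : G.Walk v v), p.IsCycle →
    ∀ x ∈ p.support, ∀ y ∈ p.support, x ≠ y → G.Adj x y

/-- Distance-hereditary: every connected induced subgraph is isometric. -/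
def DistHereditary {V : Type*} (G : SimpleGraph V) : Prop :=
  ∀ S : Set V, (G.induce S).Connected → ∀ u v : S, (G.induce S).dist u v = G.dist u v

/-- Total weight of a walk in a weighted graph. -/
def wt {V : Type*} {G : SimpleGraph V} (w : Sym2 V → ℝ) {x y : V} (p : G.Walk x y) : ℝ :=
  (p.edges.map w).sum

/-- Betweenness of points along a list (used for the ordered structure of a path). -/
def pathBtw {X : Type*} [DecidableEq X] (L : List X) (a b c : X) : Prop :=
  (L.idxOf a ≤ L.idxOf b ∧ L.idxOf b ≤ L.idxOf c) ∨
  (L.idxOf c ≤ L.idxOf b ∧ L.idxOf b ≤ L.idxOf a)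

theorem abs_sub_eq_abs_sub_add_abs_sub_iff (a b c : ℝ) :
    |a - c| = |a - b| + |b - c| ↔ (a ≤ b ∧ b ≤ c) ∨ (c ≤ b ∧ b ≤ a) := by
  rw [← Set.mem_uIcc, ← segment_eq_uIcc, mem_segment_iff_wbtw, ← dist_add_dist_eq_iff,
    Real.dist_eq, Real.dist_eq, Real.dist_eq, eq_comm]

section Betweenness

variable {X : Type*} [DecidableEq X] {d : X → X → ℝ}

theorem btw_iff_pathBtw_of_dist_eq_abs {L : List X} (f : X → ℝ)
    (hf : ∀ a ∈ L, ∀ b ∈ L, f a ≤ f b ↔ L.idxOf a ≤ L.idxOf b)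
    (hdf : ∀ a ∈ L, ∀ b ∈ L, d a b = |f a - f b|) :
    ∀ a ∈ L, ∀ b ∈ L, ∀ c ∈ L, btw d a b c ↔ pathBtw L a b c := by
  intro a ha b hb c hc
  rw [_root_.btw, pathBtw, hdf a ha c hc, hdf a ha b hb, hdf b hb c hc,
    abs_sub_eq_abs_sub_add_abs_sub_iff, hf a ha b hb, hf b hb c hc, hf c hc b hb, hf b hb a ha]

theorem btw_iff_pathBtw_of_dist_add (hm : IsMetric d) (x : X) {L : List X}
    (hL : ∀ a ∈ L, ∀ b ∈ L, L.idxOf a ≤ L.idxOf b → d x b = d x a + d a b) :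
    ∀ a ∈ L, ∀ b ∈ L, ∀ c ∈ L, btw d a b c ↔ pathBtw L a b c := by
  obtain ⟨hzero, hsymm, htri⟩ := hm
  have hnonneg : ∀ a b, 0 ≤ d a b := fun a b => by
    linarith [htri a b a, hsymm a b, (hzero a a).2 rfl]
  have hle : ∀ a ∈ L, ∀ b ∈ L, L.idxOf a ≤ L.idxOf b → d x a ≤ d x b :=
    fun a ha b hb hab => by linarith [hL a ha b hb hab, hnonneg a b]
  apply btw_iff_pathBtw_of_dist_eq_abs (d x)
  · intro a ha b hb
    refine ⟨fun hfab => ?_, hle a ha b hb⟩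
    by_contra! hba
    have hdba : d b a = 0 := by linarith [hL b hb a ha hba.le, hnonneg b a]
    rw [(hzero b a).1 hdba] at hba
    exact lt_irrefl _ hba
  · intro a ha b hb
    rcases le_total (L.idxOf a) (L.idxOf b) with hab | hba
    · rw [abs_of_nonpos (by linarith [hle a ha b hb hab])]
      linarith [hL a ha b hb hab]
    · rw [abs_of_nonneg (by linarith [hle b hb a ha hba]), hsymm]
      linarith [hL b hb a ha hba]

theorem pathBtw_cons_iff {L : List X} {x a b c : X} (hx : x ∉ L) (ha : a ∈ L) (hb : b ∈ L)
    (hc : c ∈ L) : pathBtw (x :: L) a b c ↔ pathBtw L a b c := by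
  rw [pathBtw, pathBtw, List.idxOf_cons_ne L (ne_of_mem_of_not_mem ha hx).symm,
    List.idxOf_cons_ne L (ne_of_mem_of_not_mem hb hx).symm,
    List.idxOf_cons_ne L (ne_of_mem_of_not_mem hc hx).symm]
  omega

end Betweenness

section WeightedGraph

open SimpleGraph Walk

variable {V : Type*} {G : SimpleGraph V} {w : Sym2 V → ℝ} {d : V → V → ℝ}

@[simp]
theorem wt_nil {x : V} : wt w (nil : G.Walk x x) = 0 := by simp [wt]

@[simp]
theorem wt_cons {x y z : V} (h : G.Adj x y) (p : G.Walk y z) :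
    wt w (cons h p) = w s(x, y) + wt w p := by simp [wt]

@[simp]
theorem wt_append {x y z : V} (p : G.Walk x y) (q : G.Walk y z) :
    wt w (p.append q) = wt w p + wt w q := by simp [wt]

@[simp]
theorem wt_reverse {x y : V} (p : G.Walk x y) : wt w p.reverse = wt w p := by
  simp [wt, List.sum_reverse]

theorem nonneg_of_mem_map_edges (hw : ∀ e ∈ G.edgeSet, 0 < w e) {x y : V} (p : G.Walk x y) :
    ∀ r ∈ p.edges.map w, 0 ≤ r := fun _ hr => by
  obtain ⟨e, he, rfl⟩ := List.mem_map.1 hr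
  exact (hw e (p.edges_subset_edgeSet he)).le

theorem wt_nonneg (hw : ∀ e ∈ G.edgeSet, 0 < w e) {x y : V} (p : G.Walk x y) : 0 ≤ wt w p :=
  List.sum_nonneg (nonneg_of_mem_map_edges hw p)

theorem wt_pos_of_ne (hw : ∀ e ∈ G.edgeSet, 0 < w e) {x y : V} (p : G.Walk x y)
    (hxy : x ≠ y) : 0 < wt w p := by
  cases p with
  | nil => exact absurd rfl hxy
  | cons h q => rw [wt_cons]; linarith [hw _ (G.mem_edgeSet.2 h), wt_nonneg hw q]

def IsWeightedDist (G : SimpleGraph V) (w : Sym2 V → ℝ) (d : V → V → ℝ) : Prop :=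
  ∀ u v : V, IsLeast {r : ℝ | ∃ p : G.Walk u v, p.IsPath ∧ wt w p = r} (d u v)

def IsTight (G : SimpleGraph V) (w : Sym2 V → ℝ) (d : V → V → ℝ) : Prop :=
  ∀ x y : V, G.Adj x y → ∀ p : G.Walk x y, p.IsPath → wt w p = d x y → p.length = 1

theorem IsWeightedDist.le_wt [DecidableEq V] (hw : ∀ e ∈ G.edgeSet, 0 < w e)
    (hd : IsWeightedDist G w d) {x y : V} (p : G.Walk x y) : d x y ≤ wt w p :=
  ((hd x y).2 ⟨p.bypass, p.bypass_isPath, rfl⟩).trans <|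
    (p.edges_bypass_sublist_edges.map w).sum_le_sum (nonneg_of_mem_map_edges hw p)

theorem IsWeightedDist.isMetric [DecidableEq V] (hw : ∀ e ∈ G.edgeSet, 0 < w e)
    (hd : IsWeightedDist G w d) : IsMetric d := by
  refine ⟨fun x y => ⟨fun h => ?_, ?_⟩, fun x y => ?_, fun x y z => ?_⟩
  · obtain ⟨p, -, hp⟩ := (hd x y).1
    by_contra hxy
    linarith [wt_pos_of_ne hw p hxy]
  · rintro rfl
    obtain ⟨p, -, hp⟩ := (hd x x).1
    exact le_antisymm (by simpa using hd.le_wt hw (nil : G.Walk x x)) (hp ▸ wt_nonneg hw p)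
  · have hswap : ∀ u v, d u v ≤ d v u := fun u v => by
      obtain ⟨p, -, hp⟩ := (hd v u).1
      simpa [hp] using hd.le_wt hw p.reverse
    exact le_antisymm (hswap x y) (hswap y x)
  · obtain ⟨p, -, hp⟩ := (hd x y).1
    obtain ⟨q, -, hq⟩ := (hd y z).1
    simpa [hp, hq] using hd.le_wt hw (p.append q)

theorem IsWeightedDist.wt_eq_of_wt_append_eq [DecidableEq V] (hw : ∀ e ∈ G.edgeSet, 0 < w e)
    (hd : IsWeightedDist G w d) {x y z : V} {p : G.Walk x y} {q : G.Walk y z}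
    (hpq : wt w (p.append q) = d x z) : wt w p = d x y ∧ wt w q = d y z := by
  rw [wt_append] at hpq
  constructor <;> linarith [(hd.isMetric hw).2.2 x y z, hd.le_wt hw p, hd.le_wt hw q]

theorem IsWeightedDist.wt_takeUntil_eq [DecidableEq V] (hw : ∀ e ∈ G.edgeSet, 0 < w e)
    (hd : IsWeightedDist G w d) {x y a : V} {p : G.Walk x y} (hp : wt w p = d x y)
    (ha : a ∈ p.support) : wt w (p.takeUntil a ha) = d x a :=
  (hd.wt_eq_of_wt_append_eq hw ((p.take_spec ha).symm ▸ hp)).1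

theorem IsWeightedDist.dist_eq_add_of_mem_support [DecidableEq V]
    (hw : ∀ e ∈ G.edgeSet, 0 < w e) (hd : IsWeightedDist G w d) {x y a : V} {p : G.Walk x y}
    (hp : wt w p = d x y) (ha : a ∈ p.support) : d x y = d x a + d a y := by
  obtain ⟨hxa, hay⟩ := hd.wt_eq_of_wt_append_eq hw ((p.take_spec ha).symm ▸ hp)
  rw [← hp, ← p.take_spec ha, wt_append, hxa, hay]

theorem mem_support_takeUntil_of_idxOf_le [DecidableEq V] {x y a b : V} (p : G.Walk x y)
    (hb : b ∈ p.support) (hab : p.support.idxOf a ≤ p.support.idxOf b) :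
    a ∈ (p.takeUntil b hb).support := by
  by_contra ha
  have hsplit : p.support = (p.takeUntil b hb).support ++ (p.dropUntil b hb).support.tail := by
    conv_lhs => rw [← p.take_spec hb]
    exact support_append _ _
  have hb' : b ∈ (p.takeUntil b hb).support := end_mem_support _
  rw [hsplit, List.idxOf_append_of_notMem ha, List.idxOf_append_of_mem hb'] at hab
  have := List.idxOf_lt_length_of_mem hb'
  omega

theorem IsWeightedDist.dist_add_of_idxOf_le [DecidableEq V] (hw : ∀ e ∈ G.edgeSet, 0 < w e)
    (hd : IsWeightedDist G w d) {x y : V} {p : G.Walk x y} (hp : wt w p = d x y) {a b : V}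
    (hb : b ∈ p.support) (hab : p.support.idxOf a ≤ p.support.idxOf b) :
    d x b = d x a + d a b :=
  hd.dist_eq_add_of_mem_support hw (hd.wt_takeUntil_eq hw hp hb)
    (mem_support_takeUntil_of_idxOf_le p hb hab)

theorem IsWeightedDist.dist_eq_of_adj (hd : IsWeightedDist G w d) (htight : IsTight G w d)
    {x y : V} (h : G.Adj x y) : d x y = w s(x, y) := by
  obtain ⟨p, hp, hpd⟩ := (hd x y).1
  have hlen := htight x y h p hp hpd
  obtain _ | ⟨_, _ | ⟨_, _⟩⟩ := p
  · simp at hlen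
  · simpa using hpd.symm
  · simp at hlen

theorem IsWeightedDist.wt_eq_of_btw_iff_pathBtw [DecidableEq V] (hd : IsWeightedDist G w d)
    (htight : IsTight G w d) {x y : V} {p : G.Walk x y} (hp : p.IsPath)
    (hbtw : ∀ a ∈ p.support, ∀ b ∈ p.support, ∀ c ∈ p.support,
      btw d a b c ↔ pathBtw p.support a b c) :
    wt w p = d x y := by
  induction p with
  | @nil x =>
    have hxxx : d x x = d x x + d x x :=
      (hbtw x (by simp) x (by simp) x (by simp)).2 (by simp [pathBtw])
    rw [wt_nil]
    linarith
  | @cons u v y h q ih =>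
    obtain ⟨hq, hu⟩ := (cons_isPath_iff h q).1 hp
    have hwq : wt w q = d v y := ih hq fun a ha b hb c hc => by
      simpa [pathBtw_cons_iff hu ha hb hc] using
        hbtw a (by simp [ha]) b (by simp [hb]) c (by simp [hc])
    have huvy : pathBtw (cons h q).support u v y := by
      have hv : q.support.idxOf v = 0 := by
        rw [← q.cons_tail_support]; exact List.idxOf_cons_self
      have huy : u ≠ y := fun e => hu (e ▸ q.end_mem_support)
      left
      simp [List.idxOf_cons_ne _ h.ne, List.idxOf_cons_ne _ huy, hv]
    have huvy' : d u y = d u v + d v y := (hbtw u (by simp) v (by simp) y (by simp)).2 huvy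
    rw [wt_cons, hwq, ← hd.dist_eq_of_adj htight h, huvy']

end WeightedGraph

theorem stmt_18_general {V : Type*} [DecidableEq V] (G : SimpleGraph V)
    (w : Sym2 V → ℝ) (hw : ∀ e ∈ G.edgeSet, 0 < w e) (d : V → V → ℝ)
    (hd : ∀ u v : V, IsLeast {r : ℝ | ∃ p : G.Walk u v, p.IsPath ∧ wt w p = r} (d u v))
    (htight : ∀ x y : V, G.Adj x y →
      ∀ p : G.Walk x y, p.IsPath → wt w p = d x y → p.length = 1) :
    ∀ (x y : V) (p : G.Walk x y), p.IsPath → InducedWalk G p →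
      (wt w p = d x y ↔
        ∀ a ∈ p.support, ∀ b ∈ p.support, ∀ c ∈ p.support,
          (btw d a b c ↔ pathBtw p.support a b c)) := by
  intro x y p hp _
  refine ⟨fun hmin => ?_, IsWeightedDist.wt_eq_of_btw_iff_pathBtw hd htight hp⟩
  exact btw_iff_pathBtw_of_dist_add (IsWeightedDist.isMetric hw hd) x
    fun a _ b hb hab => IsWeightedDist.dist_add_of_idxOf_le hw hd hmin hb hab

/-- In a tight weighted graph, the geodesics of the betweenness structure of the induced
metric coincide with the minimum-weight paths: an induced path has minimum weight between
its endpoints iff the betweenness relation of the metric restricted to its vertices is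
the ordered betweenness relation of the path. -/
theorem stmt_18 {V : Type*} [Fintype V] [DecidableEq V] (G : SimpleGraph V)
    (hG : G.Connected) (w : Sym2 V → ℝ) (hw : ∀ e ∈ G.edgeSet, 0 < w e) (d : V → V → ℝ)
    (hd : ∀ u v : V, IsLeast {r : ℝ | ∃ p : G.Walk u v, p.IsPath ∧ wt w p = r} (d u v))
    (htight : ∀ x y : V, G.Adj x y →
      ∀ p : G.Walk x y, p.IsPath → wt w p = d x y → p.length = 1) :
    ∀ (x y : V) (p : G.Walk x y), p.IsPath → InducedWalk G p →
      (wt w p = d x y ↔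
        ∀ a ∈ p.support, ∀ b ∈ p.support, ∀ c ∈ p.support,
          (btw d a b c ↔ pathBtw p.support a b c)) :=
  stmt_18_general G w hw d hd htight
end

section
/- Let T be a finite tree and let M = (V(T), d) be a metric space whose adjacency graph equals T. Then the betweenness relation of M equals the betweenness relation of the shortest-path metric of T. -/
/-!
Induct on `d x z`. If `x ≠ z` are not adjacent, some `y` lies between them, and the `x`–`z` path
of the tree is the lightest walk from `x` to `z`, in particular lighter than the two paths
through `y`; with the triangle inequality this shows that `d` is the path metric of `T` with
edge weights `d`. In a tree with positive edge weights, `y` is between `x` and `z` exactly when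
it lies on the `x`–`z` path: otherwise the walk through `y` contains, besides all edges of that
path, an edge at `y`. Applying this to the weights `d` and `1` gives both betweenness relations.
-/

lemma List.sum_map_le_sum_map_of_nodup_of_subset {α M : Type*} [AddCommMonoid M] [PartialOrder M]
    [IsOrderedAddMonoid M] {l₁ l₂ : List α} (f : α → M) (h : l₁.Nodup) (hs : l₁ ⊆ l₂)
    (hf : ∀ a ∈ l₂, 0 ≤ f a) : (l₁.map f).sum ≤ (l₂.map f).sum := by
  obtain ⟨l, hperm, hsub⟩ := h.subperm hs
  rw [← (hperm.map f).sum_eq]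
  exact (hsub.map f).sum_le_sum (by simpa using hf)

namespace SimpleGraph

variable {V : Type*} {G : SimpleGraph V} {u v x y z : V}

namespace Walk

def weight (w : V → V → ℝ) (p : G.Walk u v) : ℝ :=
  (p.darts.map fun e => w e.fst e.snd).sum

@[simp]
lemma weight_nil (w : V → V → ℝ) : (nil : G.Walk u u).weight w = 0 := rfl

@[simp]
lemma weight_cons (w : V → V → ℝ) (h : G.Adj u v) (p : G.Walk v z) :
    (cons h p).weight w = w u v + p.weight w := by
  simp [weight]

lemma weight_append (w : V → V → ℝ) (p : G.Walk u v) (q : G.Walk v z) :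
    (p.append q).weight w = p.weight w + q.weight w := by
  simp [weight, darts_append]

lemma weight_one (p : G.Walk u v) : p.weight (fun _ _ => 1) = p.length := by
  simp [weight, length_darts]

lemma weight_bypass_le [DecidableEq V] {w : V → V → ℝ} (hw : ∀ a b, G.Adj a b → 0 ≤ w a b)
    (p : G.Walk u v) : p.bypass.weight w ≤ p.weight w :=
  List.sum_map_le_sum_map_of_nodup_of_subset _
    (darts_nodup_of_support_nodup p.bypass_isPath.support_nodup) (darts_bypass_subset_darts p)
    fun e _ => hw _ _ e.adj

lemma add_weight_bypass_le [DecidableEq V] {w : V → V → ℝ} (hw : ∀ a b, G.Adj a b → 0 ≤ w a b)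
    (p : G.Walk u v) {e : G.Dart} (he : e ∈ p.darts) (hfst : e.fst ∉ p.bypass.support) :
    w e.fst e.snd + p.bypass.weight w ≤ p.weight w := by
  have hnodup : (e :: p.bypass.darts).Nodup :=
    List.nodup_cons.mpr ⟨fun h => hfst (dart_fst_mem_support_of_mem_darts _ h),
      darts_nodup_of_support_nodup p.bypass_isPath.support_nodup⟩
  simpa [weight] using
    List.sum_map_le_sum_map_of_nodup_of_subset (fun e : G.Dart => w e.fst e.snd) hnodup
      (List.cons_subset.mpr ⟨he, darts_bypass_subset_darts p⟩) fun e _ => hw _ _ e.adj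

end Walk

open Walk

lemma IsAcyclic.eq_of_isPath (hG : G.IsAcyclic) {p q : G.Walk u v} (hp : p.IsPath)
    (hq : q.IsPath) : p = q :=
  congrArg Subtype.val ((hG.subsingleton_path u v).elim ⟨p, hp⟩ ⟨q, hq⟩)

lemma IsAcyclic.weight_le_of_isPath (hG : G.IsAcyclic) {w : V → V → ℝ}
    (hw : ∀ a b, G.Adj a b → 0 ≤ w a b) {p : G.Walk u v} (hp : p.IsPath) (q : G.Walk u v) :
    p.weight w ≤ q.weight w := by
  classical
  rw [hG.eq_of_isPath hp q.bypass_isPath]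
  exact weight_bypass_le hw q

lemma IsAcyclic.weight_eq_add_iff_mem_support (hG : G.IsAcyclic) {w : V → V → ℝ}
    (hw : ∀ a b, G.Adj a b → 0 < w a b) {p : G.Walk x z} {q : G.Walk x y} {r : G.Walk y z}
    (hp : p.IsPath) (hq : q.IsPath) (hr : r.IsPath) :
    p.weight w = q.weight w + r.weight w ↔ y ∈ p.support := by
  classical
  constructor
  · intro h
    by_contra hy
    cases r with
    | nil => exact hy p.end_mem_support
    | @cons _ v _ hyv r =>
      have hbypass : (q.append (cons hyv r)).bypass = p :=
        hG.eq_of_isPath (bypass_isPath _) hp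
      have := add_weight_bypass_le (fun a b h => (hw a b h).le) (q.append (cons hyv r))
        (e := ⟨(y, v), hyv⟩) (by simp [darts_append]) (by simpa [hbypass] using hy)
      rw [hbypass, weight_append, ← h] at this
      linarith [hw y v hyv]
  · intro hy
    obtain ⟨q', r', hq', hr', rfl⟩ := hp.mem_support_iff_exists_append.mp hy
    rw [weight_append, hG.eq_of_isPath hq' hq, hG.eq_of_isPath hr' hr]

lemma IsTree.gBtw_iff_mem_support (hG : G.IsTree) {p : G.Walk x z} (hp : p.IsPath) :
    gBtw G x y z ↔ y ∈ p.support := by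
  obtain ⟨q, hq, hql⟩ := hG.connected.exists_path_of_dist x y
  obtain ⟨r, hr, hrl⟩ := hG.connected.exists_path_of_dist y z
  obtain ⟨p', hp', hpl⟩ := hG.connected.exists_path_of_dist x z
  rw [gBtw, ← hpl, ← hql, ← hrl, ← Nat.cast_inj (R := ℝ), Nat.cast_add, ← weight_one,
    ← weight_one, ← weight_one, hG.isAcyclic.eq_of_isPath hp' hp]
  exact hG.isAcyclic.weight_eq_add_iff_mem_support (fun _ _ _ => one_pos) hp hq hr

end SimpleGraph

section Metric

open SimpleGraph Walk

variable {V : Type*} {d : V → V → ℝ}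

lemma IsMetric.pos_of_ne (hd : IsMetric d) {x y : V} (h : x ≠ y) : 0 < d x y := by
  obtain ⟨hzero, hsymm, htri⟩ := hd
  have hxy : d x y ≠ 0 := fun h0 => h ((hzero x y).1 h0)
  exact lt_of_le_of_ne (by linarith [htri x y x, hsymm y x, (hzero x x).2 rfl]) hxy.symm

lemma IsMetric.le_weight (hd : IsMetric d) {G : SimpleGraph V} {x z : V} (p : G.Walk x z) :
    d x z ≤ p.weight d := by
  induction p with
  | nil => simp [(hd.1 _ _).2 rfl]
  | @cons u v z _ p ih =>
    rw [weight_cons]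
    linarith [hd.2.2 u v z]

lemma exists_btw_of_not_adjGraphD (hsymm : ∀ x y, d x y = d y x) {x z : V} (hxz : x ≠ z)
    (h : ¬(adjGraphD d).Adj x z) : ∃ y, y ≠ x ∧ y ≠ z ∧ btw d x y z := by
  simp only [adjGraphD, ne_eq, hxz, not_false_eq_true, true_and, not_forall] at h
  obtain ⟨y, hyx, hyz, hy⟩ := h
  refine ⟨y, hyx, hyz, ?_⟩
  by_contra hxyz
  exact hy ⟨hxyz, by rwa [hsymm z x, hsymm z y, hsymm y x, add_comm]⟩

lemma IsMetric.eq_weight_of_isPath [Finite V] (hd : IsMetric d) (hT : (adjGraphD d).IsTree)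
    {x z : V} {p : (adjGraphD d).Walk x z} (hp : p.IsPath) : d x z = p.weight d := by
  have wf : WellFounded (Function.onFun (· < ·) fun q : V × V => d q.1 q.2) :=
    Set.wellFoundedOn_range.mp (Set.finite_range _).wellFoundedOn
  suffices ∀ q : V × V, ∀ p : (adjGraphD d).Walk q.1 q.2, p.IsPath → d q.1 q.2 = p.weight d from
    this (x, z) p hp
  intro q
  induction q using wf.induction with | _ q ih
  obtain ⟨x, z⟩ := q
  intro p hp
  by_cases hxz : x = z
  · subst hxz
    simp [(isPath_iff_nil.mp hp).eq_nil, (hd.1 x x).2 rfl]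
  by_cases hadj : (adjGraphD d).Adj x z
  · rw [hT.isAcyclic.eq_of_isPath hp (Path.singleton hadj).2]
    simp [Path.singleton]
  obtain ⟨y, hyx, hyz, hbtw⟩ := exists_btw_of_not_adjGraphD hd.2.1 hxz hadj
  have hy : d x z = d x y + d y z := hbtw
  obtain ⟨q, hq⟩ := hT.connected.preconnected.exists_isPath x y
  obtain ⟨r, hr⟩ := hT.connected.preconnected.exists_isPath y z
  have hqw : d x y = q.weight d :=
    ih (x, y) (by simp only [Function.onFun]; linarith [hd.pos_of_ne hyz]) q hq
  have hrw : d y z = r.weight d :=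
    ih (y, z) (by simp only [Function.onFun]; linarith [hd.pos_of_ne hyx.symm]) r hr
  refine le_antisymm (hd.le_weight p) ?_
  calc p.weight d ≤ (q.append r).weight d :=
        hT.isAcyclic.weight_le_of_isPath (fun a b h => (hd.pos_of_ne h.ne).le) hp _
    _ = d x z := by rw [weight_append, ← hqw, ← hrw, hy]

lemma IsMetric.btw_iff_mem_support [Finite V] (hd : IsMetric d) (hT : (adjGraphD d).IsTree)
    {x y z : V} {p : (adjGraphD d).Walk x z} (hp : p.IsPath) : btw d x y z ↔ y ∈ p.support := by
  obtain ⟨q, hq⟩ := hT.connected.preconnected.exists_isPath x y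
  obtain ⟨r, hr⟩ := hT.connected.preconnected.exists_isPath y z
  unfold _root_.btw
  rw [hd.eq_weight_of_isPath hT hp, hd.eq_weight_of_isPath hT hq,
    hd.eq_weight_of_isPath hT hr]
  exact hT.isAcyclic.weight_eq_add_iff_mem_support (fun _ _ h => hd.pos_of_ne h.ne) hp hq hr

end Metric

/-- (Dress) If the adjacency graph of a finite metric space is a tree $T$, then its
betweenness relation is the one induced by $T$. -/
theorem stmt_19 {V : Type*} [Fintype V] (T : SimpleGraph V) (hT : T.IsTree)
    (d : V → V → ℝ) (hd : IsMetric d) (hadj : adjGraphD d = T) :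
    ∀ a b c : V, btw d a b c ↔ gBtw T a b c := by
  subst hadj
  intro a b c
  obtain ⟨p, hp⟩ := hT.connected.preconnected.exists_isPath a c
  rw [hd.btw_iff_mem_support hT hp, hT.gBtw_iff_mem_support hp]
end
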